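/- There exists no lightlike hypersurface (M,g), tangent to the structure vector field ζ, of an indefinite Sasakian manifold (M̄, φ̄, ζ, η, ḡ), whose local second fundamental form B is parallel, i.e. such that (∇_X B)(Y,Z) := X·B(Y,Z) − B(∇_X Y, Z) − B(Y, ∇_X Z) = 0 for all X, Y, Z tangent to M. -/

import Mathlib

/-- An algebraic model, at the level of (local) smooth functions and vector fields, of a
lightlike hypersurface `(M,g)`, tangent to the structure vector field `ζ`, of an
indefinite Sasakian manifold `(M̄, φ̄, ζ, η, ḡ)`, together with a chosen screen
distribution `S(TM)` (containing `ζ`, `φ̄ ξ` and `φ̄ N`), a (local) section `ξ` of the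
rank-one normal bundle `TM⊥ ⊆ TM`, the associated null transversal section `N`, and all
the induced objects of the Gauss–Weingarten equations.

* `F` models the commutative `ℝ`-algebra of smooth functions on (an open subset of) `M`;
* `E` models the `F`-module of sections of the ambient tangent bundle `TM̄` restricted to `M`;
* `η(X)` is encoded throughout as `ḡ(X,ζ)`, `u(X)` as `g(X,V)`, `v(X)` as `g(X,U)` and
  `θ(X)` as `ḡ(X,N)`. -/
structure SasakiLightlikeHypersurface (F : Type) [CommRing F] [Algebra ℝ F]
    (E : Type) [AddCommGroup E] [Module F E] where
  /-- the submodule of vector fields tangent to the hypersurface `M` -/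
  TM : Submodule F E
  /-- the ambient metric `ḡ` (whose restriction to `TM` is the degenerate induced metric `g`) -/
  gbar : E →ₗ[F] E →ₗ[F] F
  gbar_symm : ∀ X Y : E, gbar X Y = gbar Y X
  /-- the directional derivative `X ⬝ f` of functions along tangent vector fields -/
  D : TM → Derivation ℝ F F
  D_add : ∀ X Y : TM, D (X + Y) = D X + D Y
  D_smul : ∀ (f : F) (X : TM) (k : F), D (f • X) k = f * D X k
  /-- the Lie bracket of vector fields tangent to `M` -/
  bracket : TM → TM → TM
  D_bracket : ∀ (X Y : TM) (f : F), D (bracket X Y) f = D X (D Y f) - D Y (D X f)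
  /-- the ambient Levi-Civita connection `∇̄`, in directions tangent to `M` -/
  nablaBar : TM → E → E
  nablaBar_add : ∀ (X Y : TM) (Z : E), nablaBar (X + Y) Z = nablaBar X Z + nablaBar Y Z
  nablaBar_smul : ∀ (f : F) (X : TM) (Z : E), nablaBar (f • X) Z = f • nablaBar X Z
  nablaBar_add' : ∀ (X : TM) (Y Z : E), nablaBar X (Y + Z) = nablaBar X Y + nablaBar X Z
  nablaBar_leibniz : ∀ (X : TM) (f : F) (Y : E),
    nablaBar X (f • Y) = D X f • Y + f • nablaBar X Y
  nablaBar_metric : ∀ (X : TM) (Y Z : E),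
    D X (gbar Y Z) = gbar (nablaBar X Y) Z + gbar Y (nablaBar X Z)
  nablaBar_torsion_free : ∀ X Y : TM,
    nablaBar X (Y : E) - nablaBar Y (X : E) = (bracket X Y : E)
  /-- a (local) section `ξ` of the rank-one lightlike normal bundle `TM⊥ ⊆ TM` -/
  xi : TM
  xi_normal : ∀ Y : TM, gbar (xi : E) (Y : E) = 0
  xi_spans : ∀ X : TM, (∀ Y : TM, gbar (X : E) (Y : E) = 0) →
    ∃ f : F, (X : E) = f • (xi : E)
  /-- the screen distribution `S(TM)`, a nondegenerate complement of `TM⊥` in `TM` -/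
  S : Submodule F E
  S_le : S ≤ TM
  S_compl : ∀ X : TM, ∃ W ∈ S, ∃ f : F, (X : E) = W + f • (xi : E)
  S_nondeg : ∀ W ∈ S, (∀ Z ∈ S, gbar W Z = 0) → W = 0
  /-- the null transversal section `N`, with `ḡ(ξ,N) = 1`, `ḡ(N,N) = 0`, `ḡ(N, S(TM)) = 0` -/
  Nt : E
  gbar_xi_Nt : gbar (xi : E) Nt = 1
  gbar_Nt_Nt : gbar Nt Nt = 0
  gbar_Nt_S : ∀ Z ∈ S, gbar Nt Z = 0
  /-- the induced connection `∇` on `M` -/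
  nabla : TM → TM → TM
  /-- the local second fundamental form `B` of `M` (the second fundamental form being
  `h(X,Y) = B(X,Y) N`) -/
  B : TM → TM → F
  /-- Gauss equation: `∇̄_X Y = ∇_X Y + B(X,Y) N` -/
  gauss : ∀ X Y : TM, nablaBar X (Y : E) = (nabla X Y : E) + B X Y • Nt
  /-- the shape operator `A_N` of `M` -/
  AN : TM → TM
  /-- the transversal `1`-form `τ`, so that the transversal connection is `∇ᵗ_X N = τ(X) N` -/
  tau : TM → F
  /-- Weingarten equation: `∇̄_X N = −A_N X + τ(X) N` -/
  weingarten : ∀ X : TM, nablaBar X Nt = -(AN X : E) + tau X • Nt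
  /-- the screen shape operator `A*_ξ` -/
  Astar : TM → TM
  /-- `∇_X ξ = −A*_ξ X − τ(X) ξ` -/
  weingarten_screen : ∀ X : TM, nablaBar X (xi : E) = -(Astar X : E) - tau X • (xi : E)
  /-- the projection `P` of `TM` onto `S(TM)`: `X = PX + θ(X) ξ`, `θ(X) = ḡ(X,N)` -/
  P : TM → TM
  P_mem : ∀ X : TM, (P X : E) ∈ S
  P_spec : ∀ X : TM, (X : E) = (P X : E) + gbar (X : E) Nt • (xi : E)
  /-- the induced connection `∇*` on the screen distribution -/
  nablaStar : TM → TM → TM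
  /-- the local second fundamental form `C` of the screen distribution -/
  C : TM → TM → F
  nablaStar_mem : ∀ (X Y : TM), (Y : E) ∈ S → (nablaStar X Y : E) ∈ S
  /-- screen Gauss equation: `∇_X PY = ∇*_X PY + C(X,PY) ξ` -/
  screen_gauss : ∀ (X Y : TM), (Y : E) ∈ S → nabla X Y = nablaStar X Y + C X Y • xi
  /-- the ambient almost contact structure tensor `φ̄` -/
  phibar : E →ₗ[F] E
  /-- the structure vector field `ζ`, tangent to `M` and lying in the screen distribution -/
  zeta : TM
  zeta_mem : (zeta : E) ∈ S
  gbar_zeta_zeta : gbar (zeta : E) (zeta : E) = 1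
  /-- `φ̄² X = −X + η(X) ζ`, where `η(X) = ḡ(X,ζ)` -/
  phibar_sq : ∀ X : E, phibar (phibar X) = -X + gbar X (zeta : E) • (zeta : E)
  /-- `ḡ(φ̄X, φ̄Y) = ḡ(X,Y) − η(X) η(Y)` -/
  phibar_metric : ∀ X Y : E,
    gbar (phibar X) (phibar Y) = gbar X Y - gbar X (zeta : E) * gbar Y (zeta : E)
  /-- Sasakian condition: `(∇̄_X φ̄) Y = ḡ(X,Y) ζ − η(Y) X` -/
  sasaki : ∀ (X : TM) (Y : E), nablaBar X (phibar Y) - phibar (nablaBar X Y)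
    = gbar (X : E) Y • (zeta : E) - gbar Y (zeta : E) • (X : E)
  /-- `∇̄_X ζ = −φ̄ X` -/
  sasaki_zeta : ∀ X : TM, nablaBar X (zeta : E) = -(phibar (X : E))
  /-- `U = −φ̄ N`, tangent to `M` and lying in the screen distribution -/
  U : TM
  U_mem : (U : E) ∈ S
  U_spec : (U : E) = -(phibar Nt)
  /-- `V = −φ̄ ξ`, tangent to `M` and lying in the screen distribution -/
  V : TM
  V_mem : (V : E) ∈ S
  V_spec : (V : E) = -(phibar (xi : E))
  /-- the induced structure tensor `φ` on `M` -/
  phi : TM → TM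
  /-- `φ̄ X = φ X + u(X) N`, where `u(X) = g(X,V)` -/
  phi_spec : ∀ X : TM, phibar (X : E) = (phi X : E) + gbar (X : E) (V : E) • Nt

/-!
Test the parallelism of `B` against `ξ` and `ζ`. Since `B(·,ξ) = 0` and
`∇_X ξ = −A*_ξ X − τ(X) ξ`, it gives `B(Y, A*_ξ X) = 0`. Since `B(Y,ζ) = −u(Y)` and
`∇_X ζ = −φ X`, it gives `B(Y,φX) + B(X,φY) + τ(X) u(Y) = 0`; as `φ U = 0` and `u(U) = 1`,
this forces `τ = 0`, so `(X,Y) ↦ B(Y,φX)` is skew, and evaluating it at `(φX, U)` with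
`φ²X = −X + η(X) ζ + u(X) U` gives `B(U,X) = u(X) B(U,U) − η(X)`. At `X = A*_ξ U` the left side
vanishes, while `u(A*_ξ U) = B(U,V) = 0` and `η(A*_ξ U) = B(U,ζ) = −1`: so `0 = 1`.
-/

namespace SasakiLightlikeHypersurface

variable {F : Type} [CommRing F] [Algebra ℝ F] {E : Type} [AddCommGroup E] [Module F E]
variable (H : SasakiLightlikeHypersurface F E)

lemma gbar_tangent_xi (X : H.TM) : H.gbar (X : E) (H.xi : E) = 0 := by
  rw [H.gbar_symm]; exact H.xi_normal X

lemma gbar_Nt_xi : H.gbar H.Nt (H.xi : E) = 1 := by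
  rw [H.gbar_symm]; exact H.gbar_xi_Nt

lemma gbar_Nt_zeta : H.gbar H.Nt (H.zeta : E) = 0 := H.gbar_Nt_S _ H.zeta_mem

lemma gbar_Nt_V : H.gbar H.Nt (H.V : E) = 0 := H.gbar_Nt_S _ H.V_mem

lemma gbar_xi_zeta : H.gbar (H.xi : E) (H.zeta : E) = 0 := H.xi_normal H.zeta

lemma nablaBar_neg (X : H.TM) (Y : E) : H.nablaBar X (-Y) = -H.nablaBar X Y :=
  (AddMonoidHom.mk' (H.nablaBar X) (H.nablaBar_add' X)).map_neg Y

/-- Differentiating `ḡ(ζ,ζ) = 1` along `X` gives `2 ḡ(φ̄X, ζ) = 0`. -/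
lemma gbar_phibar_tangent_zeta (X : H.TM) : H.gbar (H.phibar (X : E)) (H.zeta : E) = 0 := by
  have h := H.nablaBar_metric X H.zeta H.zeta
  rw [H.gbar_zeta_zeta, H.sasaki_zeta, H.gbar_symm (H.zeta : E)] at h
  simp only [Derivation.map_one_eq_zero, map_neg, LinearMap.neg_apply] at h
  have h2 : (2 : ℝ) • H.gbar (H.phibar (X : E)) (H.zeta : E) = 0 := by
    rw [two_smul]; linear_combination h
  exact (smul_eq_zero.mp h2).resolve_left two_ne_zero

lemma gbar_phibar_tangent (X Y : H.TM) :
    H.gbar (H.phibar (X : E)) (Y : E) = -H.gbar (X : E) (H.phibar (Y : E)) := by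
  have h := H.phibar_metric (X : E) (H.phibar (Y : E))
  rw [H.phibar_sq, H.gbar_phibar_tangent_zeta Y] at h
  simp only [map_add, map_neg, map_smul, smul_eq_mul] at h
  rw [H.gbar_phibar_tangent_zeta X] at h
  linear_combination -h

lemma phibar_U : H.phibar (H.U : E) = H.Nt := by
  rw [H.U_spec, map_neg, H.phibar_sq, H.gbar_Nt_zeta, zero_smul, add_zero, neg_neg]

lemma phibar_V : H.phibar (H.V : E) = (H.xi : E) := by
  rw [H.V_spec, map_neg, H.phibar_sq, H.gbar_xi_zeta, zero_smul, add_zero, neg_neg]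

lemma gbar_U_V : H.gbar (H.U : E) (H.V : E) = 1 := by
  simp only [H.U_spec, H.V_spec, map_neg, LinearMap.neg_apply, neg_neg]
  rw [H.phibar_metric, H.gbar_Nt_xi, H.gbar_Nt_zeta, zero_mul, sub_zero]

lemma coe_phi (X : H.TM) :
    (H.phi X : E) = H.phibar (X : E) - H.gbar (X : E) (H.V : E) • H.Nt := by
  rw [H.phi_spec X]; abel

lemma phi_U : H.phi H.U = 0 := by
  rw [← ZeroMemClass.coe_eq_zero, H.coe_phi, H.phibar_U, H.gbar_U_V, one_smul, sub_self]

lemma gbar_phi_V (X : H.TM) : H.gbar (H.phi X : E) (H.V : E) = 0 := by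
  rw [H.coe_phi, map_sub, map_smul, LinearMap.sub_apply, LinearMap.smul_apply,
    H.gbar_phibar_tangent, H.phibar_V, H.gbar_tangent_xi, H.gbar_Nt_V]
  simp

lemma phi_phi (X : H.TM) : H.phi (H.phi X)
    = -X + H.gbar (X : E) (H.zeta : E) • H.zeta + H.gbar (X : E) (H.V : E) • H.U := by
  apply Subtype.ext
  rw [H.coe_phi, H.gbar_phi_V, zero_smul, sub_zero, H.coe_phi, map_sub, map_smul,
    H.phibar_sq]
  push_cast
  rw [H.U_spec]
  module

lemma B_eq_gbar_nablaBar_xi (X Y : H.TM) : H.B X Y = H.gbar (H.nablaBar X (Y : E)) (H.xi : E) := by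
  rw [H.gauss, map_add, map_smul, LinearMap.add_apply, LinearMap.smul_apply,
    H.gbar_tangent_xi, H.gbar_Nt_xi, smul_eq_mul, mul_one, zero_add]

lemma B_comm (X Y : H.TM) : H.B X Y = H.B Y X := by
  have h := congrArg (H.gbar · (H.xi : E)) (H.nablaBar_torsion_free X Y)
  simp only [map_sub, LinearMap.sub_apply, H.gbar_tangent_xi] at h
  rw [H.B_eq_gbar_nablaBar_xi, H.B_eq_gbar_nablaBar_xi]
  linear_combination h

lemma B_add_right (X Y Z : H.TM) : H.B X (Y + Z) = H.B X Y + H.B X Z := by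
  simp only [B_eq_gbar_nablaBar_xi, Submodule.coe_add, nablaBar_add', map_add,
    LinearMap.add_apply]

lemma B_smul_right (X Y : H.TM) (f : F) : H.B X (f • Y) = f * H.B X Y := by
  simp only [B_eq_gbar_nablaBar_xi, Submodule.coe_smul, nablaBar_leibniz, map_add, map_smul,
    LinearMap.add_apply, LinearMap.smul_apply, gbar_tangent_xi, smul_eq_mul, mul_zero, zero_add]

lemma B_neg_right (X Y : H.TM) : H.B X (-Y) = -H.B X Y := by
  rw [← neg_one_smul F Y, B_smul_right, neg_one_mul]

lemma B_sub_right (X Y Z : H.TM) : H.B X (Y - Z) = H.B X Y - H.B X Z := by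
  rw [sub_eq_add_neg, B_add_right, B_neg_right, sub_eq_add_neg]

lemma B_zero_right (X : H.TM) : H.B X 0 = 0 := by
  rw [← zero_smul F (0 : H.TM), B_smul_right, zero_mul]

lemma B_xi (X : H.TM) : H.B X H.xi = 0 := by
  rw [B_eq_gbar_nablaBar_xi, H.weingarten_screen, map_sub, map_neg, map_smul,
    LinearMap.sub_apply, LinearMap.neg_apply, LinearMap.smul_apply, H.gbar_tangent_xi,
    H.xi_normal]
  simp

lemma B_zeta (X : H.TM) : H.B X H.zeta = -H.gbar (X : E) (H.V : E) := by
  rw [B_eq_gbar_nablaBar_xi, H.sasaki_zeta, map_neg, LinearMap.neg_apply,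
    H.gbar_phibar_tangent, H.V_spec, map_neg]

lemma gbar_Astar (X Y : H.TM) : H.gbar (H.Astar X : E) (Y : E) = H.B X Y := by
  have h := H.nablaBar_metric X (H.xi : E) (Y : E)
  rw [H.xi_normal, map_zero, H.weingarten_screen, H.gbar_symm (H.xi : E),
    ← B_eq_gbar_nablaBar_xi] at h
  simp only [map_sub, map_neg, map_smul, LinearMap.sub_apply, LinearMap.neg_apply,
    LinearMap.smul_apply, H.xi_normal, smul_eq_mul, mul_zero, sub_zero] at h
  linear_combination h

lemma gbar_Astar_Nt (X : H.TM) : H.gbar (H.Astar X : E) H.Nt = 0 := by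
  have h := H.nablaBar_metric X (H.xi : E) H.Nt
  rw [H.gbar_xi_Nt, Derivation.map_one_eq_zero, H.weingarten_screen, H.weingarten] at h
  simp only [map_add, map_neg, map_sub, map_smul, LinearMap.neg_apply,
    LinearMap.sub_apply, LinearMap.smul_apply, smul_eq_mul, H.gbar_xi_Nt,
    H.xi_normal] at h
  linear_combination h

lemma nabla_xi (X : H.TM) : H.nabla X H.xi = -H.Astar X - H.tau X • H.xi := by
  apply Subtype.ext
  have h := H.gauss X H.xi
  rw [H.B_xi, zero_smul, add_zero, H.weingarten_screen] at h
  simpa using h.symm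

lemma nabla_zeta (X : H.TM) : H.nabla X H.zeta = -H.phi X := by
  apply Subtype.ext
  have h := H.gauss X H.zeta
  rw [H.sasaki_zeta, H.B_zeta, H.phi_spec] at h
  push_cast
  linear_combination (norm := module) -h

lemma nablaBar_V (X : H.TM) :
    H.nablaBar X (H.V : E) = H.phibar (H.Astar X : E) - H.tau X • (H.V : E) := by
  have h := H.sasaki X (H.xi : E)
  rw [H.gbar_tangent_xi, H.gbar_xi_zeta, zero_smul, zero_smul, sub_zero, sub_eq_zero] at h
  rw [H.V_spec, H.nablaBar_neg, h, H.weingarten_screen, map_sub, map_neg, map_smul]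
  module

def HasParallelB : Prop :=
  ∀ X Y Z : H.TM, H.D X (H.B Y Z) - H.B (H.nabla X Y) Z - H.B Y (H.nabla X Z) = 0

namespace HasParallelB

variable {H}
variable (hpar : H.HasParallelB)
include hpar

lemma B_Astar_eq_zero (X Y : H.TM) : H.B Y (H.Astar X) = 0 := by
  have h := hpar X Y H.xi
  rw [H.B_xi, H.B_xi, map_zero, H.nabla_xi, H.B_sub_right, H.B_neg_right, H.B_smul_right,
    H.B_xi] at h
  linear_combination h

lemma B_V_eq_zero (X : H.TM) : H.B X H.V = 0 := by
  have h := hpar.B_Astar_eq_zero X H.zeta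
  rwa [H.B_comm, H.B_zeta, H.gbar_Astar, neg_eq_zero] at h

lemma B_phi_add_B_phi (X Y : H.TM) :
    H.B Y (H.phi X) + H.B X (H.phi Y) + H.tau X * H.gbar (Y : E) (H.V : E) = 0 := by
  have h := hpar X Y H.zeta
  have hY : H.gbar (Y : E) (H.nablaBar X (H.V : E))
      = -H.B X (H.phi Y) - H.tau X * H.gbar (Y : E) (H.V : E) := by
    rw [H.nablaBar_V, map_sub, map_smul, H.gbar_symm, H.gbar_phibar_tangent, H.phi_spec,
      map_add, map_smul, H.gbar_Astar, H.gbar_Astar_Nt, smul_eq_mul, smul_eq_mul]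
    ring
  rw [H.B_zeta, H.B_zeta, map_neg, H.nablaBar_metric, H.gauss, H.nabla_zeta, H.B_neg_right,
    hY] at h
  simp only [map_add, map_smul, LinearMap.add_apply, LinearMap.smul_apply, H.gbar_Nt_V,
    smul_eq_mul, mul_zero, add_zero] at h
  linear_combination h

lemma tau_eq_zero (X : H.TM) : H.tau X = 0 := by
  have hUU := hpar.B_phi_add_B_phi H.U H.U
  have hUX := hpar.B_phi_add_B_phi H.U X
  have hXU := hpar.B_phi_add_B_phi X H.U
  rw [H.phi_U, H.B_zero_right, H.gbar_U_V] at hUU hXU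
  rw [H.phi_U, H.B_zero_right] at hUX
  linear_combination hXU - hUX + H.gbar (X : E) (H.V : E) * hUU

lemma B_phi_antisymm (X Y : H.TM) : H.B Y (H.phi X) = -H.B X (H.phi Y) := by
  have h := hpar.B_phi_add_B_phi X Y
  rw [hpar.tau_eq_zero, zero_mul, add_zero] at h
  linear_combination h

lemma B_U (X : H.TM) :
    H.B H.U X = H.gbar (X : E) (H.V : E) * H.B H.U H.U - H.gbar (X : E) (H.zeta : E) := by
  have h := hpar.B_phi_antisymm (H.phi X) H.U
  rw [H.phi_U, H.B_zero_right, neg_zero, H.phi_phi, H.B_add_right, H.B_add_right,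
    H.B_neg_right, H.B_smul_right, H.B_smul_right, H.B_zeta, H.gbar_U_V] at h
  linear_combination -h

end HasParallelB

end SasakiLightlikeHypersurface

/-- There exists no lightlike hypersurface `(M,g)`, tangent to the structure vector field
`ζ`, of an indefinite Sasakian manifold `(M̄, φ̄, ζ, η, ḡ)`, whose local second fundamental
form `B` is parallel, i.e. such that
`(∇_X B)(Y,Z) = X⬝B(Y,Z) − B(∇_X Y, Z) − B(Y, ∇_X Z) = 0` for all `X, Y, Z` tangent to `M`. -/
theorem no_lightlike_hypersurface_with_parallel_B
    (F : Type) [CommRing F] [Algebra ℝ F] [Nontrivial F]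
    (E : Type) [AddCommGroup E] [Module F E]
    (H : SasakiLightlikeHypersurface F E)
    (hpar : ∀ X Y Z : H.TM,
      H.D X (H.B Y Z) - H.B (H.nabla X Y) Z - H.B Y (H.nabla X Z) = 0) :
    False := by
  have hpar : H.HasParallelB := hpar
  have h := hpar.B_U (H.Astar H.U)
  rw [hpar.B_Astar_eq_zero, H.gbar_Astar, H.gbar_Astar, hpar.B_V_eq_zero, H.B_zeta,
    H.gbar_U_V] at h
  exact one_ne_zero (by linear_combination -h)
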